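/- arXiv:1805.12477 — 3 statements merged into one kernel-verified Lean document; each statement's English description precedes it below -/
import Mathlib

section
/- Let E be a finite set, A a symmetric E×E matrix over 𝔽₂, and E' ⊆ E any subset. Then the twist (E; Φ(A) * E') of the nondegeneracy set system of A by E', where Φ(A) * E' = {U Δ E' : U ∈ Φ(A)}, is a delta-matroid: it is proper and satisfies the symmetric exchange axiom. -/
open Finset
open scoped symmDiff

variable {E : Type*} [Fintype E] [DecidableEq E]

/-- The symplectic vector space `V_E = (E → 𝔽₂) × (E → 𝔽₂)`. -/
abbrev V (E : Type*) : Type _ := (E → ZMod 2) × (E → ZMod 2)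

/-- Basis vector `e`. -/
def baseV (e : E) : V E := (Pi.single e 1, 0)

/-- Basis vector `e^∨`. -/
def dualV (e : E) : V E := (0, Pi.single e 1)

/-- The symplectic form on `V E`. -/
def omegaForm (u v : V E) : ZMod 2 := ∑ e, (u.1 e * v.2 e + u.2 e * v.1 e)

/-- A subspace is Lagrangian if the form vanishes on it and its dimension is `|E|`. -/
def IsLagrangian (L : Submodule (ZMod 2) (V E)) : Prop :=
  (∀ u ∈ L, ∀ v ∈ L, omegaForm u v = 0) ∧
    Module.finrank (ZMod 2) L = Fintype.card E

/-- The span of `{e^∨ : e ∈ Y} ∪ {e : e ∈ E \ Y}`. -/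
def coordSpan (Y : Finset E) : Submodule (ZMod 2) (V E) :=
  Submodule.span (ZMod 2)
    ((fun e => dualV e) '' (Y : Set E) ∪ (fun e => baseV e) '' ((Yᶜ : Finset E) : Set E))

/-- `Y` is feasible for `L` iff `L ∩ ⟨Y^∨ ⊔ (E \ Y)⟩ = 0`. -/
def Feasible (L : Submodule (ZMod 2) (V E)) (Y : Finset E) : Prop :=
  L ⊓ coordSpan Y = ⊥

/-- The set system `ν_E(L)`. -/
def nu (L : Submodule (ZMod 2) (V E)) : Set (Finset E) := {Y | Feasible L Y}

/-- The nondegeneracy set system of a matrix `A`. -/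
def Phi (A : Matrix E E (ZMod 2)) : Set (Finset E) :=
  {U : Finset E | IsUnit (A.submatrix (fun i : ↥U => (i : E)) (fun j : ↥U => (j : E))).det}

/-- The symmetric exchange axiom. -/
def SEAxiom (Φ : Set (Finset E)) : Prop :=
  ∀ φ₁ ∈ Φ, ∀ φ₂ ∈ Φ, ∀ e ∈ φ₁ ∆ φ₂, ∃ e' ∈ φ₁ ∆ φ₂, φ₁ ∆ ({e, e'} : Finset E) ∈ Φ

/-- Binary delta-matroid: a twist of a nondegeneracy set system. -/
def IsBinaryDM (Φ : Set (Finset E)) : Prop :=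
  ∃ (A : Matrix E E (ZMod 2)) (E' : Finset E), A.IsSymm ∧ Φ = (· ∆ E') '' Phi A

/-- The involution `σ_e` swapping `e` and `e^∨`. -/
def sigmaE (e : E) : V E →ₗ[ZMod 2] V E where
  toFun u := (fun f => if f = e then u.2 f else u.1 f, fun f => if f = e then u.1 f else u.2 f)
  map_add' u v := by ext f <;> dsimp <;> split <;> rfl
  map_smul' c u := by ext f <;> dsimp <;> split <;> rfl

/-- Composition of the `σ_e` over `e ∈ E'`. -/
def sigmaSet (E' : Finset E) : V E →ₗ[ZMod 2] V E where
  toFun u := (fun f => if f ∈ E' then u.2 f else u.1 f, fun f => if f ∈ E' then u.1 f else u.2 f)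
  map_add' u v := by ext f <;> dsimp <;> split <;> rfl
  map_smul' c u := by ext f <;> dsimp <;> split <;> rfl

/-- A Lagrangian subspace is graphic if for every `e` there is `v_e ∈ L` with
`ω(v_e,e)=1` and `ω(v_e,e')=0` for `e' ≠ e`. -/
def IsGraphic (L : Submodule (ZMod 2) (V E)) : Prop :=
  ∀ e : E, ∃ v ∈ L, omegaForm v (baseV e) = 1 ∧
    ∀ e' : E, e' ≠ e → omegaForm v (baseV e') = 0

/-- The vector `e^∨ + Σ_{e'} A_{e,e'} e'`. -/
def rowVec (A : Matrix E E (ZMod 2)) (e : E) : V E := (A e, Pi.single e 1)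

/-- The subspace spanned by the vectors `rowVec A e`, `e ∈ E`. -/
def graphOf (A : Matrix E E (ZMod 2)) : Submodule (ZMod 2) (V E) :=
  Submodule.span (ZMod 2) (Set.range (rowVec A))

/-- The first Vassiliev move: `e^∨ ↦ e^∨ + e'`, `e'^∨ ↦ e'^∨ + e`, fixing other basis vectors. -/
def vassiliev1 (e e' : E) : V E →ₗ[ZMod 2] V E where
  toFun u := (fun f => u.1 f + (if f = e' then u.2 e else 0) + (if f = e then u.2 e' else 0), u.2)
  map_add' u v := by ext f <;> dsimp <;> split_ifs <;> ring
  map_smul' c u := by ext f <;> dsimp <;> split_ifs <;> ring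

/-!
Twisting by `E'` preserves the exchange axiom, so it suffices to prove it for `Phi A`. For
`U ∈ Phi A` the principal pivot transform `pivot A U` has as graph the graph of `A` with the
coordinates in `U` exchanged; exchanging these coordinates turns the kernel condition for the
principal submatrix on `X` into the one on `X ∆ U`, so `Phi (pivot A U) = Phi A ∆ U`, and over
`𝔽₂` the pivot is again symmetric. This reduces the exchange at `U` to the exchange at `∅`: for
`e ∈ V ∈ Phi A`, either `A e e ≠ 0`, or the row of `e` in `A[V]` has an entry `A e e' ≠ 0` and
then `A[{e, e'}]` is nonsingular.
-/

open Matrix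

section LinearAlgebra

variable {ι K : Type*}

/-- `(y, x) ∈ coordSpan X`, written pointwise. -/
def InCoordSubspace [Zero K] (X : Finset ι) (x y : ι → K) : Prop :=
  (∀ i ∉ X, x i = 0) ∧ ∀ i ∈ X, y i = 0

theorem inCoordSubspace_piecewise_iff [DecidableEq ι] [Zero K] {X U : Finset ι} {x y : ι → K} :
    InCoordSubspace X (U.piecewise y x) (U.piecewise x y) ↔ InCoordSubspace (X ∆ U) x y := by
  simp only [InCoordSubspace, ← forall_and]
  refine forall_congr' fun i => ?_
  by_cases hX : i ∈ X <;> by_cases hU : i ∈ U <;> simp [hX, hU, Finset.mem_symmDiff]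

variable [Fintype ι]

theorem mulVec_apply_eq_sum_of_support [NonUnitalNonAssocSemiring K] (A : Matrix ι ι K)
    {X : Finset ι} {z : ι → K} (hz : ∀ j ∉ X, z j = 0) (i : ι) :
    (A *ᵥ z) i = ∑ j ∈ X, A i j * z j :=
  (Finset.sum_subset (Finset.subset_univ X) fun j _ hj => by simp [hz j hj]).symm

theorem piecewise_dotProduct_add_piecewise_dotProduct [DecidableEq ι] [Mul K] [AddCommMonoid K]
    (U : Finset ι) (a b c d : ι → K) :
    U.piecewise a b ⬝ᵥ U.piecewise c d + U.piecewise b a ⬝ᵥ U.piecewise d c =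
      a ⬝ᵥ c + b ⬝ᵥ d := by
  simp only [dotProduct, ← Finset.sum_add_distrib]
  refine Finset.sum_congr rfl fun i _ => ?_
  by_cases hi : i ∈ U <;> simp [hi, add_comm]

theorem isSymm_of_dotProduct_mulVec [DecidableEq ι] [CommSemiring K] {B : Matrix ι ι K}
    (h : ∀ x y, x ⬝ᵥ (B *ᵥ y) = (B *ᵥ x) ⬝ᵥ y) : B.IsSymm :=
  IsSymm.ext fun i j => by simpa using h (Pi.single j 1) (Pi.single i 1)

theorem isUnit_det_iff_mulVec_eq_zero [DecidableEq ι] [Field K] (M : Matrix ι ι K) :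
    IsUnit M.det ↔ ∀ v, M *ᵥ v = 0 → v = 0 := by
  rw [isUnit_iff_ne_zero, Ne, ← exists_mulVec_eq_zero_iff]
  simp only [ne_eq, not_exists, not_and, not_imp_not]

end LinearAlgebra

section Pivot

variable {K : Type*} [Field K]

theorem isUnit_det_submatrix_iff (A : Matrix E E K) (X : Finset E) :
    IsUnit (A.submatrix ((↑) : X → E) (↑)).det ↔
      ∀ z : E → K, InCoordSubspace X z (A *ᵥ z) → z = 0 := by
  have hrestrict : ∀ z : E → K, (∀ j ∉ X, z j = 0) →
      A.submatrix ((↑) : X → E) (↑) *ᵥ (fun j : X => z j) = fun i : X => (A *ᵥ z) i := by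
    intro z hz
    funext i
    rw [mulVec_apply_eq_sum_of_support A hz, ← Finset.sum_coe_sort X]
    rfl
  rw [isUnit_det_iff_mulVec_eq_zero]
  constructor
  · rintro h z ⟨hsupp, hker⟩
    have hzX := h _ ((hrestrict z hsupp).trans (funext fun i => hker i i.2))
    funext i
    by_cases hi : i ∈ X
    · exact congrFun hzX ⟨i, hi⟩
    · exact hsupp i hi
  · intro h v hv
    let z : E → K := fun i => if hi : i ∈ X then v ⟨i, hi⟩ else 0
    have hsupp : ∀ j ∉ X, z j = 0 := fun j hj => dif_neg hj
    have hzv : (fun j : X => z j) = v := funext fun j => dif_pos j.2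
    have hz : z = 0 := h z ⟨hsupp, fun i hi => by
      simpa [hzv, hv] using (congrFun (hrestrict z hsupp) ⟨i, hi⟩).symm⟩
    rw [← hzv, hz]
    rfl

def rowsOn (U : Finset E) (A B : Matrix E E K) : Matrix E E K :=
  Matrix.of fun i => if i ∈ U then A i else B i

theorem rowsOn_mulVec (U : Finset E) (A B : Matrix E E K) (z : E → K) :
    rowsOn U A B *ᵥ z = U.piecewise (A *ᵥ z) (B *ᵥ z) := by
  funext i
  by_cases hi : i ∈ U <;> simp [rowsOn, mulVec, hi]

/-- The principal pivot transform: by `pivot_mulVec_rowsOn`, its graph is the graph of `A` with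
the coordinates in `U` exchanged between `z` and `A *ᵥ z`. -/
noncomputable def pivot (A : Matrix E E K) (U : Finset E) : Matrix E E K :=
  rowsOn U 1 A * (rowsOn U A 1)⁻¹

variable {A : Matrix E E K} {U : Finset E}

theorem isUnit_det_rowsOn (hU : IsUnit (A.submatrix ((↑) : U → E) (↑)).det) :
    IsUnit (rowsOn U A 1).det := by
  rw [isUnit_det_iff_mulVec_eq_zero]
  intro z hz
  rw [rowsOn_mulVec, one_mulVec] at hz
  refine (isUnit_det_submatrix_iff A U).1 hU z ⟨fun i hi => ?_, fun i hi => ?_⟩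
  · simpa [hi] using congrFun hz i
  · simpa [hi] using congrFun hz i

theorem pivot_mulVec_rowsOn (hU : IsUnit (A.submatrix ((↑) : U → E) (↑)).det) (z : E → K) :
    pivot A U *ᵥ (rowsOn U A 1 *ᵥ z) = rowsOn U 1 A *ᵥ z := by
  rw [pivot, mulVec_mulVec, Matrix.mul_assoc, nonsing_inv_mul _ (isUnit_det_rowsOn hU),
    Matrix.mul_one]

theorem isUnit_det_submatrix_pivot_iff (hU : IsUnit (A.submatrix ((↑) : U → E) (↑)).det)
    (X : Finset E) :
    IsUnit ((pivot A U).submatrix ((↑) : X → E) (↑)).det ↔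
      IsUnit (A.submatrix ((↑) : ↥(X ∆ U) → E) (↑)).det := by
  have hP := (isUnit_iff_isUnit_det _).2 (isUnit_det_rowsOn hU)
  have hsurj : Function.Surjective (rowsOn U A 1).mulVec := mulVec_surjective_iff_isUnit.2 hP
  have hinj : Function.Injective (rowsOn U A 1).mulVec := mulVec_injective_iff_isUnit.2 hP
  rw [isUnit_det_submatrix_iff, isUnit_det_submatrix_iff, hsurj.forall]
  refine forall_congr' fun z => ?_
  rw [pivot_mulVec_rowsOn hU, hinj.eq_iff' (mulVec_zero _), rowsOn_mulVec, rowsOn_mulVec,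
    one_mulVec, inCoordSubspace_piecewise_iff]

/-- In characteristic two the symplectic form vanishes on the graph of a symmetric matrix and is
preserved by exchanging coordinates, so it vanishes on the graph of the pivot. -/
theorem pivot_isSymm [CharP K 2] (hA : A.IsSymm)
    (hU : IsUnit (A.submatrix ((↑) : U → E) (↑)).det) : (pivot A U).IsSymm := by
  have hsurj : Function.Surjective (rowsOn U A 1).mulVec :=
    mulVec_surjective_iff_isUnit.2 ((isUnit_iff_isUnit_det _).2 (isUnit_det_rowsOn hU))
  refine isSymm_of_dotProduct_mulVec fun x y => ?_
  obtain ⟨z, rfl⟩ := hsurj x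
  obtain ⟨w, rfl⟩ := hsurj y
  have hAzw : (A *ᵥ z) ⬝ᵥ w = z ⬝ᵥ (A *ᵥ w) := by
    rw [dotProduct_mulVec, ← mulVec_transpose, hA.eq]
  rw [pivot_mulVec_rowsOn hU, pivot_mulVec_rowsOn hU, ← CharTwo.add_eq_zero]
  simp only [rowsOn_mulVec, one_mulVec]
  rw [piecewise_dotProduct_add_piecewise_dotProduct, hAzw, CharTwo.add_self_eq_zero]

end Pivot

section Exchange

variable {A : Matrix E E (ZMod 2)}

theorem mem_Phi_iff {X : Finset E} :
    X ∈ Phi A ↔ ∀ z : E → ZMod 2, InCoordSubspace X z (A *ᵥ z) → z = 0 :=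
  isUnit_det_submatrix_iff A X

theorem mem_Phi_pivot_iff {U : Finset E} (hU : U ∈ Phi A) (X : Finset E) :
    X ∈ Phi (pivot A U) ↔ X ∆ U ∈ Phi A :=
  isUnit_det_submatrix_pivot_iff hU X

theorem empty_mem_Phi (A : Matrix E E (ZMod 2)) : ∅ ∈ Phi A :=
  mem_Phi_iff.2 fun _ hz => funext fun i => hz.1 i (Finset.notMem_empty i)

theorem singleton_mem_Phi {e : E} (he : A e e ≠ 0) : {e} ∈ Phi A := by
  refine mem_Phi_iff.2 fun z ⟨hsupp, hker⟩ => funext fun i => ?_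
  have hze : A e e * z e = 0 := by
    simpa [mulVec_apply_eq_sum_of_support A hsupp] using hker e (Finset.mem_singleton_self e)
  by_cases hi : i = e
  · subst hi
    exact (mul_eq_zero.1 hze).resolve_left he
  · exact hsupp i (by simpa using hi)

theorem pair_mem_Phi {e e' : E} (hne : e ≠ e') (hee : A e e = 0) (hee' : A e e' ≠ 0)
    (he'e : A e' e ≠ 0) : {e, e'} ∈ Phi A := by
  refine mem_Phi_iff.2 fun z ⟨hsupp, hker⟩ => ?_
  have hrow : ∀ i ∈ ({e, e'} : Finset E), A i e * z e + A i e' * z e' = 0 := fun i hi => by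
    simpa [mulVec_apply_eq_sum_of_support A hsupp, Finset.sum_pair hne] using hker i hi
  have hze' : z e' = 0 := by
    simpa [hee, hee'] using hrow e (by simp)
  have hze : z e = 0 := by
    simpa [hze', he'e] using hrow e' (by simp)
  funext i
  by_cases hi : i ∈ ({e, e'} : Finset E)
  · rcases Finset.mem_insert.1 hi with rfl | hi
    · exact hze
    · rwa [Finset.mem_singleton.1 hi]
  · exact hsupp i hi

theorem exists_pair_mem_Phi (hA : A.IsSymm) {V : Finset E} (hV : V ∈ Phi A) {e : E}
    (he : e ∈ V) : ∃ e' ∈ V, {e, e'} ∈ Phi A := by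
  by_cases hee : A e e = 0
  · obtain ⟨e', he', hee'⟩ : ∃ e' ∈ V, A e e' ≠ 0 := by
      by_contra! hrow
      have hsingle := mem_Phi_iff.1 hV (Pi.single e 1) ⟨fun i hi => ?_, fun i hi => ?_⟩
      · simpa using congrFun hsingle e
      · exact Pi.single_eq_of_ne (by rintro rfl; exact hi he) 1
      · rw [mulVec_single_one, ← hA.eq]
        exact hrow i hi
    have hne : e ≠ e' := by rintro rfl; exact hee' hee
    exact ⟨e', he', pair_mem_Phi hne hee hee' (by rwa [hA.apply])⟩
  · exact ⟨e, he, by simpa using singleton_mem_Phi hee⟩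

theorem seAxiom_Phi (hA : A.IsSymm) : SEAxiom (Phi A) := by
  intro U hU V hV e he
  have hVU : V ∆ U ∈ Phi (pivot A U) := by
    rwa [mem_Phi_pivot_iff hU, symmDiff_symmDiff_cancel_right]
  obtain ⟨e', he', hee'⟩ :=
    exists_pair_mem_Phi (pivot_isSymm hA hU) hVU (by rwa [symmDiff_comm])
  exact ⟨e', by rwa [symmDiff_comm], by rwa [mem_Phi_pivot_iff hU, symmDiff_comm] at hee'⟩

end Exchange

theorem SEAxiom.image_symmDiff {Φ : Set (Finset E)} (h : SEAxiom Φ) (E' : Finset E) :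
    SEAxiom ((· ∆ E') '' Φ) := by
  rintro _ ⟨U, hU, rfl⟩ _ ⟨V, hV, rfl⟩ e he
  have hUV : U ∆ E' ∆ (V ∆ E') = U ∆ V := by
    rw [symmDiff_symmDiff_symmDiff_comm, symmDiff_self, symmDiff_bot]
  rw [hUV] at he ⊢
  obtain ⟨e', he', hmem⟩ := h U hU V hV e he
  exact ⟨e', he', U ∆ {e, e'}, hmem, symmDiff_right_comm U {e, e'} E'⟩

/-- The twist of the nondegeneracy set system of a symmetric matrix over `𝔽₂`
by any subset is a delta-matroid: proper and satisfying the symmetric exchange axiom. -/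
theorem stmt1 (A : Matrix E E (ZMod 2)) (hA : A.IsSymm) (E' : Finset E) :
    ((· ∆ E') '' Phi A).Nonempty ∧ SEAxiom ((· ∆ E') '' Phi A) :=
  ⟨⟨_, Set.mem_image_of_mem _ (empty_mem_Phi A)⟩, (seAxiom_Phi hA).image_symmDiff E'⟩
end

section
/- Let E be a finite set. The mapping ν_E is injective on Lagrangian subspaces: if L₁, L₂ ⊆ V_E are Lagrangian subspaces with ν_E(L₁) = ν_E(L₂) (i.e. the two set systems have the same feasible subsets), then L₁ = L₂. -/
open Finset
open scoped symmDiff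

variable {E : Type*} [Fintype E] [DecidableEq E]

/-!
Twisting by `sigmaSet Y` preserves being Lagrangian and turns feasibility of `U ∆ Y` into
feasibility of `U`, so after twisting by a set feasible for `L₁` we may assume that `∅` is
feasible. Such a set exists for every isotropic `L`: while `L ∩ coordSpan Y ≠ 0`, flipping
one coordinate of `Y` makes this intersection strictly smaller. Once `∅` is feasible, `L`
projects isomorphically onto the dual coordinates, so `L = graphOf A` with `A` symmetric by
isotropy, and `U` is feasible exactly when the principal submatrix `A[U]` is nonsingular.
Over `𝔽₂` a symmetric matrix is determined by its principal minors of orders one and two: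
`A e e = det A[{e}]` and `A e f = A e f ^ 2 = A e e * A f f + det A[{e, f}]`.
-/

set_option linter.unusedSectionVars false

lemma sum_smul_baseV_add_smul_dualV (u : V E) :
    ∑ e, (u.1 e • baseV e + u.2 e • dualV e) = u := by
  ext f <;> simp [baseV, dualV, Prod.fst_sum, Prod.snd_sum, Finset.sum_apply, Pi.single_apply]

lemma mem_coordSpan {Y : Finset E} {u : V E} :
    u ∈ coordSpan Y ↔ ∀ e, (if e ∈ Y then u.1 e else u.2 e) = 0 := by
  constructor
  · intro hu
    induction hu using Submodule.span_induction with
    | mem x hx =>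
      rcases hx with ⟨e, he, rfl⟩ | ⟨e, he, rfl⟩ <;> intro f <;> by_cases hf : f = e <;>
        simp_all [dualV, baseV]
    | zero => simp
    | add x y _ _ hx hy => intro f; have := hx f; have := hy f; split_ifs at * <;> simp_all
    | smul a x _ hx => intro f; have := hx f; split_ifs at * <;> simp_all
  · intro h
    rw [← sum_smul_baseV_add_smul_dualV u]
    refine Submodule.sum_mem _ fun e _ => ?_
    have he := h e
    split_ifs at he with heY
    · rw [he, zero_smul, zero_add]
      exact Submodule.smul_mem _ _ (Submodule.subset_span (Or.inl ⟨e, heY, rfl⟩))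
    · rw [he, zero_smul, add_zero]
      exact Submodule.smul_mem _ _ (Submodule.subset_span (Or.inr ⟨e, by simpa using heY, rfl⟩))

lemma mem_coordSpan_empty {u : V E} : u ∈ coordSpan ∅ ↔ u.2 = 0 := by
  simp [mem_coordSpan, funext_iff]

section Twist

variable (Y : Finset E)

lemma sigmaSet_involutive : Function.Involutive (sigmaSet Y) := fun u => by
  ext f <;> simp only [sigmaSet, LinearMap.coe_mk, AddHom.coe_mk] <;> split_ifs <;> rfl

def sigmaSetEquiv : V E ≃ₗ[ZMod 2] V E :=
  LinearEquiv.ofInvolutive (sigmaSet Y) (sigmaSet_involutive Y)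

lemma omegaForm_sigmaSet (u v : V E) :
    omegaForm (sigmaSet Y u) (sigmaSet Y v) = omegaForm u v :=
  Finset.sum_congr rfl fun f _ => by
    simp only [sigmaSet, LinearMap.coe_mk, AddHom.coe_mk]
    split_ifs <;> ring

lemma sigmaSet_mem_coordSpan_iff {U : Finset E} {u : V E} :
    sigmaSet Y u ∈ coordSpan (U ∆ Y) ↔ u ∈ coordSpan U := by
  simp only [mem_coordSpan, sigmaSet, LinearMap.coe_mk, AddHom.coe_mk, Finset.mem_symmDiff]
  refine forall_congr' fun e => ?_
  by_cases heY : e ∈ Y <;> by_cases heU : e ∈ U <;> simp [heY, heU]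

lemma coe_sigmaSetEquiv : (sigmaSetEquiv Y : V E →ₗ[ZMod 2] V E) = sigmaSet Y := rfl

lemma map_sigmaSet_coordSpan (U : Finset E) :
    (coordSpan U).map (sigmaSet Y) = coordSpan (U ∆ Y) := by
  ext v
  refine ⟨?_, fun hv => ⟨sigmaSet Y v, ?_, sigmaSet_involutive Y v⟩⟩
  · rintro ⟨u, hu, rfl⟩
    exact (sigmaSet_mem_coordSpan_iff Y).2 hu
  · rwa [SetLike.mem_coe, ← sigmaSet_mem_coordSpan_iff Y, sigmaSet_involutive Y v]

lemma map_sigmaSet_inf_coordSpan (L : Submodule (ZMod 2) (V E)) (U : Finset E) :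
    L.map (sigmaSet Y) ⊓ coordSpan U = (L ⊓ coordSpan (U ∆ Y)).map (sigmaSet Y) := by
  rw [Submodule.map_inf _ (sigmaSet_involutive Y).injective, map_sigmaSet_coordSpan,
    symmDiff_symmDiff_cancel_right]

lemma feasible_map_sigmaSet_iff {L : Submodule (ZMod 2) (V E)} {U : Finset E} :
    Feasible (L.map (sigmaSet Y)) U ↔ Feasible L (U ∆ Y) := by
  rw [Feasible, Feasible, map_sigmaSet_inf_coordSpan, ← coe_sigmaSetEquiv,
    Submodule.map_eq_bot_iff]

lemma finrank_map_sigmaSet_inf_coordSpan (L : Submodule (ZMod 2) (V E)) (U : Finset E) :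
    Module.finrank (ZMod 2) ↥(L.map (sigmaSet Y) ⊓ coordSpan U) =
      Module.finrank (ZMod 2) ↥(L ⊓ coordSpan (U ∆ Y)) := by
  rw [map_sigmaSet_inf_coordSpan, ← coe_sigmaSetEquiv, LinearEquiv.finrank_map_eq]

lemma nu_map_sigmaSet (L : Submodule (ZMod 2) (V E)) :
    nu (L.map (sigmaSet Y)) = (· ∆ Y) ⁻¹' nu L :=
  Set.ext fun _ => feasible_map_sigmaSet_iff Y

end Twist

def IsIsotropic (L : Submodule (ZMod 2) (V E)) : Prop :=
  ∀ u ∈ L, ∀ v ∈ L, omegaForm u v = 0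

lemma IsIsotropic.map_sigmaSet {L : Submodule (ZMod 2) (V E)} (hL : IsIsotropic L)
    (Y : Finset E) : IsIsotropic (L.map (sigmaSet Y)) := by
  rintro _ ⟨u, hu, rfl⟩ _ ⟨v, hv, rfl⟩
  rw [omegaForm_sigmaSet]
  exact hL u hu v hv

lemma IsLagrangian.map_sigmaSet {L : Submodule (ZMod 2) (V E)} (hL : IsLagrangian L)
    (Y : Finset E) : IsLagrangian (L.map (sigmaSet Y)) :=
  ⟨IsIsotropic.map_sigmaSet hL.1 Y, by rw [← coe_sigmaSetEquiv, LinearEquiv.finrank_map_eq, hL.2]⟩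

lemma IsIsotropic.exists_inf_coordSpan_singleton_lt {L : Submodule (ZMod 2) (V E)}
    (hL : IsIsotropic L) (hne : L ⊓ coordSpan ∅ ≠ ⊥) :
    ∃ e, L ⊓ coordSpan {e} < L ⊓ coordSpan ∅ := by
  obtain ⟨v, hv, hv0⟩ := Submodule.exists_mem_ne_zero_of_ne_bot hne
  obtain ⟨hvL, hv⟩ := Submodule.mem_inf.1 hv
  rw [mem_coordSpan_empty] at hv
  obtain ⟨e, he⟩ : ∃ e, v.1 e ≠ 0 := by
    by_contra! h
    exact hv0 (Prod.ext (funext h) hv)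
  refine ⟨e, lt_of_le_of_ne (fun w hw => ?_) fun heq => ?_⟩
  · obtain ⟨hwL, hw⟩ := Submodule.mem_inf.1 hw
    refine Submodule.mem_inf.2 ⟨hwL, mem_coordSpan_empty.2 ?_⟩
    rw [mem_coordSpan] at hw
    -- `v` pairs with `w` only through the coordinate `e`
    have hω : omegaForm v w = v.1 e * w.2 e := by
      refine (Finset.sum_eq_single e (fun f _ hf => ?_) (by simp)).trans (by simp [hv])
      have hwf : w.2 f = 0 := by simpa [hf] using hw f
      simp [hv, hwf]
    have hwe : w.2 e = 0 := (mul_eq_zero.1 (hω ▸ hL v hvL w hwL)).resolve_left he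
    funext f
    by_cases hf : f = e
    · rw [hf, hwe]; rfl
    · simpa [hf] using hw f
  · have hv' : v ∈ L ⊓ coordSpan {e} := heq ▸ ⟨hvL, mem_coordSpan_empty.2 hv⟩
    exact he (by simpa using mem_coordSpan.1 hv'.2 e)

lemma IsIsotropic.exists_feasible {L : Submodule (ZMod 2) (V E)} (hL : IsIsotropic L) :
    ∃ Y, Feasible L Y := by
  obtain ⟨Y, -, hY⟩ := Finset.exists_min_image univ
    (fun Y => Module.finrank (ZMod 2) ↥(L ⊓ coordSpan Y)) univ_nonempty
  refine ⟨Y, by_contra fun hne => ?_⟩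
  have hne' : ¬Feasible (L.map (sigmaSet Y)) ∅ := by
    rwa [feasible_map_sigmaSet_iff, ← bot_eq_empty, bot_symmDiff]
  obtain ⟨e, hlt⟩ := (hL.map_sigmaSet Y).exists_inf_coordSpan_singleton_lt hne'
  have hrank := Submodule.finrank_lt_finrank_of_lt hlt
  rw [finrank_map_sigmaSet_inf_coordSpan, finrank_map_sigmaSet_inf_coordSpan, ← bot_eq_empty,
    bot_symmDiff] at hrank
  exact (hY _ (mem_univ _)).not_gt hrank

section Graph

open Matrix

variable {A B : Matrix E E (ZMod 2)}

lemma mem_graphOf {u : V E} : u ∈ graphOf A ↔ u.1 = u.2 ᵥ* A := by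
  constructor
  · intro hu
    induction hu using Submodule.span_induction with
    | mem x hx =>
      obtain ⟨e, rfl⟩ := hx
      exact (single_one_vecMul e A).symm
    | zero => exact (zero_vecMul A).symm
    | add x y _ _ hx hy => simp [add_vecMul, hx, hy]
    | smul a x _ hx => simp [smul_vecMul, hx]
  · intro hu
    have hsum : ∑ e, u.2 e • rowVec A e = u := by
      ext f <;> simp [rowVec, hu, vecMul_eq_sum, Prod.fst_sum, Prod.snd_sum, Pi.single_apply]
    rw [← hsum]
    exact Submodule.sum_mem _ fun e _ =>
      Submodule.smul_mem _ _ (Submodule.subset_span ⟨e, rfl⟩)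

lemma omegaForm_rowVec (e f : E) : omegaForm (rowVec A e) (rowVec A f) = A e f + A f e := by
  simp [omegaForm, rowVec, Pi.single_apply, Finset.sum_add_distrib]

lemma IsIsotropic.isSymm_of_graphOf (h : IsIsotropic (graphOf A)) : A.IsSymm :=
  IsSymm.ext fun e f => by
    rw [← CharTwo.add_eq_zero, ← omegaForm_rowVec]
    exact h _ (Submodule.subset_span ⟨f, rfl⟩) _ (Submodule.subset_span ⟨e, rfl⟩)

lemma exists_eq_graphOf {L : Submodule (ZMod 2) (V E)}
    (hdim : Module.finrank (ZMod 2) L = Fintype.card E) (h : Feasible L ∅) :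
    ∃ A : Matrix E E (ZMod 2), L = graphOf A := by
  have hsnd : ∀ u ∈ L, u.2 = 0 → u = 0 := fun u hu hu₂ =>
    (Submodule.mem_bot _).1 (h ▸ Submodule.mem_inf.2 ⟨hu, mem_coordSpan_empty.2 hu₂⟩)
  let π : L →ₗ[ZMod 2] (E → ZMod 2) := (LinearMap.snd _ _ _).comp L.subtype
  have hπ : Function.Surjective π := by
    refine (LinearMap.injective_iff_surjective_of_finrank_eq_finrank (by simpa using hdim)).1 ?_
    rw [← LinearMap.ker_eq_bot, Submodule.eq_bot_iff]
    exact fun u hu => Subtype.ext (hsnd u u.2 hu)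
  choose r hr using fun e => hπ (Pi.single e 1)
  let A : Matrix E E (ZMod 2) := fun e => (r e : V E).1
  have hle : graphOf A ≤ L := Submodule.span_le.2 <| by
    rintro _ ⟨e, rfl⟩
    exact (Prod.ext rfl (hr e).symm : rowVec A e = r e) ▸ (r e).2
  refine ⟨A, le_antisymm (fun u hu => ?_) hle⟩
  have hw : (u.2 ᵥ* A, u.2) ∈ L := hle (mem_graphOf.2 rfl)
  rw [sub_eq_zero.1 (hsnd _ (L.sub_mem hu hw) (sub_self u.2))]
  exact mem_graphOf.2 rfl

lemma feasible_graphOf_iff {U : Finset E} :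
    Feasible (graphOf A) U ↔
      ∀ c : E → ZMod 2, (∀ g ∉ U, c g = 0) → (∀ f ∈ U, (c ᵥ* A) f = 0) → c = 0 := by
  simp only [Feasible, Submodule.eq_bot_iff, Submodule.mem_inf, mem_graphOf, mem_coordSpan]
  refine ⟨fun H c hc hcA => congrArg Prod.snd (H (c ᵥ* A, c) ⟨rfl, fun f => ?_⟩),
    fun H u ⟨hu, hU⟩ => ?_⟩
  · split_ifs with hf
    exacts [hcA f hf, hc f hf]
  · have h₂ : u.2 = 0 :=
      H u.2 (fun g hg => by simpa [hg] using hU g) (fun f hf => by simpa [hf, hu] using hU f)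
    exact Prod.ext (by rw [hu, h₂, zero_vecMul]; rfl) h₂

lemma vecMul_eq_sum_of_support {U : Finset E} {c : E → ZMod 2} (hc : ∀ g ∉ U, c g = 0) :
    c ᵥ* A = ∑ g ∈ U, c g • A g := by
  rw [vecMul_eq_sum]
  exact (Finset.sum_subset (subset_univ U) fun g _ hg => by simp [hc g hg]).symm

lemma feasible_graphOf_singleton_iff (e : E) : Feasible (graphOf A) {e} ↔ A e e = 1 := by
  have hkernel : Feasible (graphOf A) {e} ↔ ∀ s : ZMod 2, s * A e e = 0 → s = 0 := by
    rw [feasible_graphOf_iff]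
    constructor
    · intro H s h
      simpa using congrFun (H (Pi.single e s) (fun g hg => by simp_all)
        (fun x hx => by simpa [mem_singleton.1 hx, single_vecMul] using h)) e
    · intro H c hc hcA
      rw [vecMul_eq_sum_of_support hc, sum_singleton] at hcA
      have hs := H (c e) (by simpa using hcA e (mem_singleton_self e))
      funext g
      by_cases hge : g = e
      · rwa [hge]
      exact hc g (by simpa using hge)
  rw [hkernel]
  generalize A e e = a
  revert a
  decide

lemma feasible_graphOf_pair_iff {e f : E} (hef : e ≠ f) :
    Feasible (graphOf A) {e, f} ↔ A e e * A f f + A e f * A f e = 1 := by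
  have hkernel : Feasible (graphOf A) {e, f} ↔ ∀ s t : ZMod 2,
      s * A e e + t * A f e = 0 → s * A e f + t * A f f = 0 → s = 0 ∧ t = 0 := by
    rw [feasible_graphOf_iff]
    constructor
    · intro H s t h₁ h₂
      have hc := H (Pi.single e s + Pi.single f t)
        (fun g hg => by simp_all) (fun x hx => by
          rcases mem_insert.1 hx with rfl | hx
          · simpa [add_vecMul, single_vecMul] using h₁
          · simpa [mem_singleton.1 hx, add_vecMul, single_vecMul] using h₂)
      exact ⟨by simpa [hef] using congrFun hc e, by simpa [hef.symm] using congrFun hc f⟩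
    · intro H c hc hcA
      rw [vecMul_eq_sum_of_support hc, sum_pair hef] at hcA
      obtain ⟨hs, ht⟩ :=
        H (c e) (c f) (by simpa using hcA e (by simp)) (by simpa using hcA f (by simp))
      funext g
      by_cases hge : g = e
      · rwa [hge]
      by_cases hgf : g = f
      · rwa [hgf]
      exact hc g (by simp [hge, hgf])
  rw [hkernel]
  generalize A e e = a, A f f = b, A e f = x, A f e = y
  revert a b x y
  decide

end Graph

lemma eq_of_feasible_graphOf_iff {A B : Matrix E E (ZMod 2)} (hA : A.IsSymm) (hB : B.IsSymm)
    (h : ∀ U, Feasible (graphOf A) U ↔ Feasible (graphOf B) U) : A = B := by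
  have hdiag : ∀ e, A e e = B e e := fun e => by
    have hentry := (feasible_graphOf_singleton_iff e).symm.trans
      ((h {e}).trans (feasible_graphOf_singleton_iff e))
    revert hentry
    generalize A e e = a, B e e = b
    revert a b
    decide
  ext e f
  rcases eq_or_ne e f with rfl | hef
  · exact hdiag e
  have hminor := (feasible_graphOf_pair_iff hef).symm.trans
    ((h _).trans (feasible_graphOf_pair_iff hef))
  rw [hA.apply e f, hB.apply e f, hdiag e, hdiag f] at hminor
  -- over `𝔽₂` the off-diagonal entry is its own square, so the 2 × 2 minor determines it
  revert hminor
  generalize B e e * B f f = d, A e f = x, B e f = y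
  revert d x y
  decide

lemma IsLagrangian.eq_of_nu_eq_of_feasible_empty {L₁ L₂ : Submodule (ZMod 2) (V E)}
    (h₁ : IsLagrangian L₁) (h₂ : IsLagrangian L₂) (h : nu L₁ = nu L₂) (h₀ : Feasible L₁ ∅) :
    L₁ = L₂ := by
  have hfeas : ∀ U, Feasible L₁ U ↔ Feasible L₂ U := fun U => Set.ext_iff.1 h U
  obtain ⟨A₁, rfl⟩ := exists_eq_graphOf h₁.2 h₀
  obtain ⟨A₂, rfl⟩ := exists_eq_graphOf h₂.2 ((hfeas ∅).1 h₀)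
  rw [eq_of_feasible_graphOf_iff (IsIsotropic.isSymm_of_graphOf h₁.1)
    (IsIsotropic.isSymm_of_graphOf h₂.1) hfeas]

/-- `ν_E` is injective on Lagrangian subspaces. -/
theorem stmt3 (L₁ L₂ : Submodule (ZMod 2) (V E))
    (h₁ : IsLagrangian L₁) (h₂ : IsLagrangian L₂) (h : nu L₁ = nu L₂) :
    L₁ = L₂ := by
  obtain ⟨Y, hY⟩ := IsIsotropic.exists_feasible h₁.1
  refine Submodule.map_injective_of_injective (sigmaSet_involutive Y).injective ?_
  refine (h₁.map_sigmaSet Y).eq_of_nu_eq_of_feasible_empty (h₂.map_sigmaSet Y)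
    (by rw [nu_map_sigmaSet, nu_map_sigmaSet, h]) ?_
  rwa [feasible_map_sigmaSet_iff, ← bot_eq_empty, bot_symmDiff]
end

section
/- Let E be a finite set, L ⊆ V_E a graphic Lagrangian subspace, and A(L) its associated symmetric E×E matrix over 𝔽₂ (A(L)_{e,e'} = ω(v_e, e'^∨)). Then for every Y ⊆ E: L ∩ span({e^∨ : e ∈ Y} ∪ {e : e ∈ E \ Y}) = {0} if and only if the submatrix A(L)|_Y is invertible over 𝔽₂. Equivalently, ν_E(L) equals the nondegeneracy set system (E; Φ(A(L))). -/
open Finset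
open scoped symmDiff

variable {E : Type*} [Fintype E] [DecidableEq E]

/-!
The vectors `v_e` have second coordinate `Pi.single e 1` and first coordinate the `e`-th row of
`A = A(L)`, so they are linearly independent and, `L` having dimension `|E|`, they span `L`:
`L = {(c ᵥ* A, c) | c : E → 𝔽₂}`. Such a vector lies in `span(Y^∨ ∪ (E \ Y))` exactly when `c` is
supported on `Y` and `c ᵥ* A` vanishes on `Y`, i.e. when `c|_Y` is a left null vector of `A|_Y`.
Hence `L` meets that span trivially iff `A|_Y` has trivial left kernel, i.e. is invertible.
-/

open Matrix

lemma omegaForm_baseV (u : V E) (e : E) : omegaForm u (baseV e) = u.2 e := by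
  simp [omegaForm, baseV, Pi.single_apply]

lemma omegaForm_dualV (u : V E) (e : E) : omegaForm u (dualV e) = u.1 e := by
  simp [omegaForm, dualV, Pi.single_apply]

lemma mem_coordSpan_iff {Y : Finset E} {u : V E} :
    u ∈ coordSpan Y ↔ (∀ f ∈ Y, u.1 f = 0) ∧ (∀ f ∉ Y, u.2 f = 0) := by
  constructor
  · intro hu
    induction hu using Submodule.span_induction with
    | mem x hx =>
      rcases hx with ⟨e, he, rfl⟩ | ⟨e, he, rfl⟩
      · refine ⟨fun f _ => rfl, fun f hf => ?_⟩
        have : f ≠ e := by rintro rfl; exact hf he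
        simp [dualV, Pi.single_eq_of_ne this]
      · have he' : e ∉ Y := by simpa using he
        refine ⟨fun f hf => ?_, fun f _ => rfl⟩
        have : f ≠ e := by rintro rfl; exact he' hf
        simp [baseV, Pi.single_eq_of_ne this]
    | zero => exact ⟨fun _ _ => rfl, fun _ _ => rfl⟩
    | add x y _ _ hx hy =>
      exact ⟨fun f hf => by simp [hx.1 f hf, hy.1 f hf],
        fun f hf => by simp [hx.2 f hf, hy.2 f hf]⟩
    | smul c x _ hx =>
      exact ⟨fun f hf => by simp [hx.1 f hf], fun f hf => by simp [hx.2 f hf]⟩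
  · rintro ⟨h1, h2⟩
    have hu : u = ∑ e ∈ Yᶜ, u.1 e • baseV e + ∑ e ∈ Y, u.2 e • dualV e := by
      ext f <;> by_cases hf : f ∈ Y <;>
        simp [baseV, dualV, Prod.fst_sum, Prod.snd_sum, Finset.sum_apply, Pi.single_apply, hf, h1,
          h2]
    rw [hu]
    refine add_mem (Submodule.sum_mem _ fun e he => Submodule.smul_mem _ _ ?_)
      (Submodule.sum_mem _ fun e he => Submodule.smul_mem _ _ ?_)
    · exact Submodule.subset_span (Or.inr ⟨e, by simpa using he, rfl⟩)
    · exact Submodule.subset_span (Or.inl ⟨e, by simpa using he, rfl⟩)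

lemma sum_smul_rowVec (A : Matrix E E (ZMod 2)) (c : E → ZMod 2) :
    ∑ e, c e • rowVec A e = (c ᵥ* A, c) := by
  ext f <;> simp [rowVec, vecMul, dotProduct, Prod.fst_sum, Prod.snd_sum, Finset.sum_apply,
    Pi.single_apply]

lemma linearIndependent_rowVec (A : Matrix E E (ZMod 2)) :
    LinearIndependent (ZMod 2) (rowVec A) :=
  Fintype.linearIndependent_iff.2 fun c hc =>
    congrFun (by simpa [sum_smul_rowVec] using congrArg Prod.snd hc : c = 0)

lemma mem_graphOf_iff {A : Matrix E E (ZMod 2)} {u : V E} :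
    u ∈ graphOf A ↔ ∃ c : E → ZMod 2, (c ᵥ* A, c) = u := by
  simp only [graphOf, Submodule.mem_span_range_iff_exists_fun, sum_smul_rowVec]

lemma finrank_graphOf (A : Matrix E E (ZMod 2)) :
    Module.finrank (ZMod 2) (graphOf A) = Fintype.card E :=
  finrank_span_eq_card (linearIndependent_rowVec A)

lemma graphOf_eq_of_rowVec_mem {A : Matrix E E (ZMod 2)} {L : Submodule (ZMod 2) (V E)}
    (hL : Module.finrank (ZMod 2) L = Fintype.card E) (hA : ∀ e, rowVec A e ∈ L) :
    graphOf A = L :=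
  Submodule.eq_of_le_of_finrank_le (Submodule.span_le.2 (Set.range_subset_iff.2 hA))
    (by rw [hL, finrank_graphOf])

lemma eq_rowVec_of_omegaForm_baseV {v : E → V E}
    (hv : ∀ e, omegaForm (v e) (baseV e) = 1 ∧ ∀ e' ≠ e, omegaForm (v e) (baseV e') = 0) :
    v = rowVec (Matrix.of fun e e' => omegaForm (v e) (dualV e')) := by
  funext e
  refine Prod.ext (funext fun f => (omegaForm_dualV _ _).symm) (funext fun f => ?_)
  by_cases hf : f = e
  · subst hf
    simpa [rowVec, omegaForm_baseV] using (hv f).1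
  · simpa [rowVec, omegaForm_baseV, Pi.single_eq_of_ne hf] using (hv e).2 f hf

lemma feasible_graphOf_iff_forall {A : Matrix E E (ZMod 2)} {Y : Finset E} :
    Feasible (graphOf A) Y ↔
      ∀ c : E → ZMod 2, (∀ e ∉ Y, c e = 0) → (∀ j ∈ Y, (c ᵥ* A) j = 0) → c = 0 := by
  rw [Feasible, ← disjoint_iff, Submodule.disjoint_def]
  constructor
  · intro h c hc hcA
    have := h _ (mem_graphOf_iff.2 ⟨c, rfl⟩) (mem_coordSpan_iff.2 ⟨hcA, hc⟩)
    exact congrArg Prod.snd this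
  · rintro h _ hu hY
    obtain ⟨c, rfl⟩ := mem_graphOf_iff.1 hu
    obtain ⟨hcA, hc⟩ := mem_coordSpan_iff.1 hY
    simp [h c hc hcA]

lemma vecMul_submatrix_val {ι K : Type*} [Fintype ι] [Semiring K] (A : Matrix ι ι K)
    {Y : Finset ι} {c : ι → K} (hc : ∀ e ∉ Y, c e = 0) (j : Y) :
    ((fun i : Y => c i) ᵥ* A.submatrix Subtype.val Subtype.val) j = (c ᵥ* A) j := by
  simp only [vecMul, dotProduct, submatrix_apply]
  rw [Finset.sum_coe_sort Y (fun e => c e * A e j)]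
  exact Finset.sum_subset (Finset.subset_univ Y) fun e _ he => by simp [hc e he]

lemma isUnit_det_submatrix_iff_s13 {ι K : Type*} [Fintype ι] [DecidableEq ι] [Field K]
    (A : Matrix ι ι K) (Y : Finset ι) :
    IsUnit (A.submatrix (fun i : Y => (i : ι)) (fun j : Y => (j : ι))).det ↔
      ∀ c : ι → K, (∀ e ∉ Y, c e = 0) → (∀ j ∈ Y, (c ᵥ* A) j = 0) → c = 0 := by
  rw [isUnit_iff_ne_zero, ← not_iff_not, not_not, ← exists_vecMul_eq_zero_iff]
  push Not
  constructor
  · rintro ⟨w, hw0, hw⟩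
    let c : ι → K := fun e => if h : e ∈ Y then w ⟨e, h⟩ else 0
    have hc : ∀ e ∉ Y, c e = 0 := fun e he => dif_neg he
    refine ⟨c, hc, fun j hj => ?_, fun h0 => hw0 (funext fun i => ?_)⟩
    · rw [← vecMul_submatrix_val A hc ⟨j, hj⟩]
      simpa [c] using congrFun hw ⟨j, hj⟩
    · simpa [c] using congrFun h0 i
  · rintro ⟨c, hc, hcA, hc0⟩
    refine ⟨fun i => c i, fun h0 => hc0 (funext fun e => ?_), funext fun j => ?_⟩
    · by_cases he : e ∈ Y
      · exact congrFun h0 ⟨e, he⟩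
      · exact hc e he
    · rw [vecMul_submatrix_val A hc]
      exact hcA j j.2

lemma feasible_graphOf_iff_mem_Phi (A : Matrix E E (ZMod 2)) (Y : Finset E) :
    Feasible (graphOf A) Y ↔ Y ∈ Phi A := by
  rw [feasible_graphOf_iff_forall, Phi, Set.mem_ofPred_eq, isUnit_det_submatrix_iff_s13]

theorem stmt13_general (L : Submodule (ZMod 2) (V E)) (hL : IsLagrangian L)
    (v : E → V E)
    (hv : ∀ e : E, v e ∈ L ∧ omegaForm (v e) (baseV e) = 1 ∧
      ∀ e' : E, e' ≠ e → omegaForm (v e) (baseV e') = 0) :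
    (∀ Y : Finset E, Feasible L Y ↔
        Y ∈ Phi (Matrix.of fun e e' => omegaForm (v e) (dualV e'))) ∧
    nu L = Phi (Matrix.of fun e e' => omegaForm (v e) (dualV e')) := by
  set A : Matrix E E (ZMod 2) := Matrix.of fun e e' => omegaForm (v e) (dualV e')
  have hvA : v = rowVec A := eq_rowVec_of_omegaForm_baseV fun e => (hv e).2
  have hLA : graphOf A = L := graphOf_eq_of_rowVec_mem hL.2 fun e => hvA ▸ (hv e).1
  have hfeas : ∀ Y, Feasible L Y ↔ Y ∈ Phi A := hLA ▸ feasible_graphOf_iff_mem_Phi A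
  exact ⟨hfeas, Set.ext hfeas⟩

/-- for a graphic Lagrangian subspace `L` with associated matrix `A(L)`,
a subset `Y` is feasible iff the submatrix `A(L)|_Y` is invertible; equivalently,
`ν_E(L) = Φ(A(L))`. -/
theorem stmt13 (L : Submodule (ZMod 2) (V E)) (hL : IsLagrangian L) (hG : IsGraphic L)
    (v : E → V E)
    (hv : ∀ e : E, v e ∈ L ∧ omegaForm (v e) (baseV e) = 1 ∧
      ∀ e' : E, e' ≠ e → omegaForm (v e) (baseV e') = 0) :
    (∀ Y : Finset E, Feasible L Y ↔
        Y ∈ Phi (Matrix.of fun e e' => omegaForm (v e) (dualV e'))) ∧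
    nu L = Phi (Matrix.of fun e e' => omegaForm (v e) (dualV e')) :=
  stmt13_general L hL v hv
end
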